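/- arXiv:1501.05626 — 4 statements merged into one kernel-verified Lean document; each statement's English description precedes it below -/
import Mathlib

section
/- Schur's Pfaffian identity: for any real numbers x_1,...,x_{2k} with x_a + x_b ≠ 0 for all a,b, the Pfaffian of the 2k×2k skew-symmetric matrix with entries (x_a - x_b)/(x_a + x_b) equals the product over 1 ≤ a < b ≤ 2k of (x_a - x_b)/(x_a + x_b). -/
/-!
Expanding the Pfaffian sum along the first pair `(σ 0, σ 1)` expresses it through the
Pfaffians of the submatrices with two rows and columns `p, q` removed, with sign `(-1) ^ (p + q)`.
For distinct `x`, the product `∏_{a < b} (x a - x b) / (x a + x b)` obeys the same recursion: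
removing one index `p` splits off `∏_{c ≠ p} (x p - x c) / (x p + x c)`, and what is left is
the partial fraction expansion
`∏_c (t - y c) / (t + y c) =`
`  1 + ∑_b ((t - y b) / (t + y b) - 1) ∏_{c ≠ b} (y b + y c) / (y b - y c)`,
whose value at `t = 0` fixes the constant term when the number of `y`'s is odd.
If two of the `x` coincide, both sides vanish: the product has a zero factor, and swapping the
two equal rows and columns changes the sign of the Pfaffian but not the matrix.
-/

/-- The Pfaffian of an `n × n` real matrix (intended for skew-symmetric matrices with
`n` even): `pf A = (1/(2^k k!)) ∑_{σ ∈ S_{2k}} sgn(σ) ∏_{i=1}^k A_{σ(2i-1), σ(2i)}`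
where `k = n/2`. -/
noncomputable def pf {n : ℕ} (A : Matrix (Fin n) (Fin n) ℝ) : ℝ :=
  (1 / ((2 : ℝ) ^ (n / 2) * (Nat.factorial (n / 2) : ℝ))) *
    ∑ σ : Equiv.Perm (Fin n), ((Equiv.Perm.sign σ : ℤ) : ℝ) *
      ∏ i : Fin (n / 2),
        A (σ ⟨2 * (i : ℕ), by have := i.isLt; omega⟩)
          (σ ⟨2 * (i : ℕ) + 1, by have := i.isLt; omega⟩)

open Finset Equiv

namespace Schur

section PfaffianSum

variable {R : Type*} [CommRing R] {k n : ℕ}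

def pairFst (i : Fin k) : Fin (2 * k) := ⟨2 * i, by omega⟩

def pairSnd (i : Fin k) : Fin (2 * k) := ⟨2 * i + 1, by omega⟩

@[simp] lemma pairFst_zero : pairFst (0 : Fin (k + 1)) = 0 := rfl

@[simp] lemma pairSnd_zero : pairSnd (0 : Fin (k + 1)) = 1 := rfl

@[simp] lemma pairFst_succ (i : Fin k) : pairFst i.succ = (pairFst i).succ.succ :=
  Fin.ext (by simp [pairFst]; ring)

@[simp] lemma pairSnd_succ (i : Fin k) : pairSnd i.succ = (pairSnd i).succ.succ :=
  Fin.ext (by simp [pairSnd]; ring)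

def pfaffianSum (A : Matrix (Fin (2 * k)) (Fin (2 * k)) R) : R :=
  ∑ σ : Perm (Fin (2 * k)), ((Perm.sign σ : ℤ) : R) *
    ∏ i : Fin k, A (σ (pairFst i)) (σ (pairSnd i))

lemma pf_eq_pfaffianSum (A : Matrix (Fin (2 * k)) (Fin (2 * k)) ℝ) :
    pf A = (1 / (2 ^ k * k.factorial)) * pfaffianSum A := by
  have hk : 2 * k / 2 = k := by omega
  unfold pf pfaffianSum
  congr 1
  · rw [hk]
  · refine sum_congr rfl fun σ _ => congrArg _ ?_
    exact Fin.prod_congr' (fun i => A (σ (pairFst i)) (σ (pairSnd i))) hk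

/-- The permutation `0 ↦ p`, `j + 1 ↦ p.succAbove (ρ j)`. -/
def succAbovePerm (p : Fin (n + 1)) (ρ : Perm (Fin n)) : Perm (Fin (n + 1)) :=
  p.cycleRange⁻¹ * Perm.decomposeFin.symm (0, ρ)

@[simp] lemma succAbovePerm_zero (p : Fin (n + 1)) (ρ : Perm (Fin n)) :
    succAbovePerm p ρ 0 = p := by
  simp [succAbovePerm, Perm.inv_def]

@[simp] lemma succAbovePerm_succ (p : Fin (n + 1)) (ρ : Perm (Fin n)) (j : Fin n) :
    succAbovePerm p ρ j.succ = p.succAbove (ρ j) := by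
  simp [succAbovePerm, Perm.inv_def]

@[simp] lemma succAbovePerm_one (p : Fin (n + 2)) (ρ : Perm (Fin (n + 1))) :
    succAbovePerm p ρ 1 = p.succAbove (ρ 0) := by
  rw [← Fin.succ_zero_eq_one, succAbovePerm_succ]

lemma sign_succAbovePerm (p : Fin (n + 1)) (ρ : Perm (Fin n)) :
    Perm.sign (succAbovePerm p ρ) = (-1) ^ (p : ℕ) * Perm.sign ρ := by
  simp [succAbovePerm]

lemma succAbovePerm_bijective :
    Function.Bijective fun pρ : Fin (n + 1) × Perm (Fin n) => succAbovePerm pρ.1 pρ.2 := by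
  refine (Fintype.bijective_iff_injective_and_card _).2 ⟨?_, ?_⟩
  · rintro ⟨p, ρ⟩ ⟨p', ρ'⟩ h
    obtain rfl : p = p' := by simpa using congr($h 0)
    refine Prod.ext rfl (Perm.ext fun j => (Fin.succAbove_right_injective (p := p)) ?_)
    simpa using congr($h j.succ)
  · simp [Fintype.card_perm, Nat.factorial_succ]

lemma sum_perm_succ {M : Type*} [AddCommMonoid M] (f : Perm (Fin (n + 1)) → M) :
    ∑ σ, f σ = ∑ p, ∑ ρ, f (succAbovePerm p ρ) := by
  rw [← Fintype.sum_prod_type']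
  exact (succAbovePerm_bijective.sum_comp f).symm

lemma pfaffianSum_succ (A : Matrix (Fin (2 * k + 2)) (Fin (2 * k + 2)) R) :
    pfaffianSum (k := k + 1) A = ∑ p : Fin (2 * k + 2), ∑ q : Fin (2 * k + 1),
      (-1) ^ ((p : ℕ) + q) * A p (p.succAbove q) *
      pfaffianSum (A.submatrix (p.succAbove ∘ q.succAbove) (p.succAbove ∘ q.succAbove)) := by
  unfold pfaffianSum
  refine (sum_perm_succ (n := 2 * k + 1) _).trans (sum_congr rfl fun p _ => ?_)
  refine (sum_perm_succ _).trans (sum_congr rfl fun q _ => ?_)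
  rw [mul_sum]
  refine sum_congr rfl fun τ _ => ?_
  rw [Fin.prod_univ_succ]
  simp [sign_succAbovePerm, pow_add]
  ring

lemma pfaffianSum_submatrix (A : Matrix (Fin (2 * k)) (Fin (2 * k)) R) (π : Perm (Fin (2 * k))) :
    pfaffianSum (A.submatrix π π) = Perm.sign π * pfaffianSum A := by
  unfold pfaffianSum
  rw [← Equiv.sum_comp (Equiv.mulLeft π⁻¹), mul_sum]
  refine sum_congr rfl fun τ _ => ?_
  simp [Perm.mul_apply, mul_assoc]

lemma pfaffianSum_eq_zero_of_submatrix_swap [NoZeroDivisors R] [NeZero (2 : R)]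
    (A : Matrix (Fin (2 * k)) (Fin (2 * k)) R) {a b : Fin (2 * k)} (hab : a ≠ b)
    (hA : A.submatrix (swap a b) (swap a b) = A) : pfaffianSum A = 0 := by
  have h := pfaffianSum_submatrix A (swap a b)
  rw [hA, Perm.sign_swap hab] at h
  have h2 : 2 * pfaffianSum A = 0 := by
    rw [two_mul, ← eq_neg_iff_add_eq_zero]
    simpa using h
  exact (mul_eq_zero.1 h2).resolve_left two_ne_zero

end PfaffianSum

section PairProd

variable {R : Type*} [CommRing R] {n : ℕ}

def pairProd (A : Matrix (Fin n) (Fin n) R) : R := ∏ a, ∏ b ∈ Ioi a, A a b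

lemma pairProd_eq_prod_ite (A : Matrix (Fin n) (Fin n) R) :
    pairProd A = ∏ a, ∏ b, if a < b then A a b else 1 := by
  unfold pairProd
  refine prod_congr rfl fun a _ => ?_
  rw [← prod_filter]
  congr 1
  ext
  simp

lemma card_succAbove_lt (p : Fin (n + 1)) : #{j : Fin n | p.succAbove j < p} = p := by
  simp_rw [Fin.succAbove_lt_iff_castSucc_lt, Fin.lt_def, Fin.val_castSucc]
  rw [Fin.card_filter_val_lt]
  omega

lemma pairProd_eq_succAbove (A : Matrix (Fin (n + 1)) (Fin (n + 1)) R)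
    (hA : ∀ a b, A b a = -A a b) (p : Fin (n + 1)) :
    pairProd A = (-1) ^ (p : ℕ) * (∏ j, A p (p.succAbove j)) *
      pairProd (A.submatrix p.succAbove p.succAbove) := by
  have hcross : ∀ j, (if p < p.succAbove j then A p (p.succAbove j) else 1) *
      (if p.succAbove j < p then A (p.succAbove j) p else 1) =
        (if p.succAbove j < p then -1 else 1) * A p (p.succAbove j) := by
    intro j
    rcases (p.succAbove_ne j).lt_or_gt with h | h
    · rw [if_neg h.not_gt, if_pos h, hA]
      simp [h]
    · simp [h, h.not_gt]
  rw [pairProd_eq_prod_ite, pairProd_eq_prod_ite, Fin.prod_univ_succAbove _ p]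
  simp_rw [Fin.prod_univ_succAbove _ p, lt_irrefl, if_false, one_mul,
    Fin.succAbove_lt_succAbove_iff]
  rw [prod_mul_distrib, ← mul_assoc, ← prod_mul_distrib]
  simp_rw [hcross]
  rw [prod_mul_distrib, prod_ite, prod_const_one, prod_const, mul_one, card_succAbove_lt]
  rfl

end PairProd

section SchurRatio

variable {K : Type*} [Field K]

def schurRatio (s t : K) : K := (s - t) / (s + t)

lemma schurRatio_swap (s t : K) : schurRatio t s = -schurRatio s t := by
  rw [schurRatio, schurRatio, add_comm, ← neg_div, neg_sub]

lemma schurRatio_zero_left {t : K} (ht : t ≠ 0) : schurRatio 0 t = -1 := by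
  rw [schurRatio, zero_sub, zero_add, neg_div, div_self ht]

lemma schurRatio_neg_left (s t : K) : schurRatio (-s) t = (schurRatio s t)⁻¹ := by
  rw [schurRatio, schurRatio, inv_div, ← neg_div_neg_eq]
  ring_nf

theorem prod_schurRatio_eq_one_add_sum {ι : Type*} [DecidableEq ι] (y : ι → K) (s : Finset ι)
    (hy : Set.InjOn y s) (t : K) (ht : ∀ c ∈ s, t + y c ≠ 0) :
    ∏ c ∈ s, schurRatio t (y c) =
      1 + ∑ b ∈ s, (schurRatio t (y b) - 1) * ∏ c ∈ s.erase b, (schurRatio (y b) (y c))⁻¹ := by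
  induction s using Finset.induction_on generalizing t with
  | empty => simp
  | insert a s ha ih =>
    set E : ι → K := fun b => ∏ c ∈ s.erase b, (schurRatio (y b) (y c))⁻¹
    have hys : Set.InjOn y s := hy.mono (by simp)
    have hya : ∀ c ∈ s, y a ≠ y c := fun c hc h =>
      ha (hy (mem_insert_self a s) (mem_insert_of_mem hc) h ▸ hc)
    -- the factor contributed by the new point `a` is the left side at `t = -y a`
    have hEa : ∏ c ∈ s, (schurRatio (y a) (y c))⁻¹ =
        1 + ∑ b ∈ s, ((schurRatio (y a) (y b))⁻¹ - 1) * E b := by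
      simp_rw [← schurRatio_neg_left]
      exact ih hys (-y a) fun c hc h => hya c hc (neg_add_eq_zero.1 h)
    have hEb : ∀ b ∈ s, ∏ c ∈ (insert a s).erase b, (schurRatio (y b) (y c))⁻¹ =
        (schurRatio (y b) (y a))⁻¹ * E b := fun b hb => by
      rw [erase_insert_of_ne (ne_of_mem_of_not_mem hb ha).symm,
        prod_insert fun h => ha (mem_of_mem_erase h)]
    have hstep : ∀ b ∈ s, schurRatio t (y a) * ((schurRatio t (y b) - 1) * E b) =
        (schurRatio t (y a) - 1) * (((schurRatio (y a) (y b))⁻¹ - 1) * E b) +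
          (schurRatio t (y b) - 1) * ((schurRatio (y b) (y a))⁻¹ * E b) := fun b hb => by
      have h₁ := ht a (mem_insert_self a s)
      have h₂ := ht b (mem_insert_of_mem hb)
      have h₃ := sub_ne_zero.2 (hya b hb)
      have h₄ := sub_ne_zero.2 (hya b hb).symm
      simp only [schurRatio, inv_div]
      field_simp
      ring
    rw [prod_insert ha, sum_insert ha, erase_insert ha,
      sum_congr rfl fun b hb => by rw [hEb b hb], hEa,
      ih hys t fun c hc => ht c (mem_insert_of_mem hc), mul_add, mul_sum,
      sum_congr rfl hstep, sum_add_distrib, ← mul_sum]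
    ring

theorem sum_schurRatio_mul_prod_inv_of_odd [NeZero (2 : K)] {ι : Type*} [DecidableEq ι]
    (y : ι → K) (s : Finset ι) (hs : Odd #s) (hy : Set.InjOn y s) (hy₀ : ∀ c ∈ s, y c ≠ 0) (t : K)
    (ht : ∀ c ∈ s, t + y c ≠ 0) :
    ∑ b ∈ s, schurRatio t (y b) * ∏ c ∈ s.erase b, (schurRatio (y b) (y c))⁻¹ =
      ∏ c ∈ s, schurRatio t (y c) := by
  have h₀ := prod_schurRatio_eq_one_add_sum y s hy 0 fun c hc => by
    rw [zero_add]
    exact hy₀ c hc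
  rw [prod_congr rfl fun c hc => schurRatio_zero_left (hy₀ c hc), prod_const, hs.neg_one_pow,
    sum_congr rfl fun b hb => by rw [schurRatio_zero_left (hy₀ b hb)], ← mul_sum] at h₀
  have hsum : ∑ b ∈ s, ∏ c ∈ s.erase b, (schurRatio (y b) (y c))⁻¹ = 1 :=
    mul_left_cancel₀ two_ne_zero (by linear_combination h₀)
  rw [prod_schurRatio_eq_one_add_sum y s hy t ht]
  simp only [sub_mul, one_mul, sum_sub_distrib, hsum]
  ring

end SchurRatio

section SchurMatrix

variable {K : Type*} [Field K] {m n : ℕ}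

def schurMatrix (x : Fin n → K) : Matrix (Fin n) (Fin n) K :=
  Matrix.of fun a b => schurRatio (x a) (x b)

lemma schurMatrix_submatrix (x : Fin m → K) (e : Fin n → Fin m) :
    (schurMatrix x).submatrix e e = schurMatrix (x ∘ e) := rfl

lemma pairProd_schurMatrix_eq_succAbove (x : Fin (n + 1) → K) (p : Fin (n + 1)) :
    pairProd (schurMatrix x) = (-1) ^ (p : ℕ) * (∏ j, schurRatio (x p) (x (p.succAbove j))) *
      pairProd (schurMatrix (x ∘ p.succAbove)) :=
  pairProd_eq_succAbove _ (fun a b => schurRatio_swap (x a) (x b)) p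

lemma pairProd_schurMatrix_eq_zero {x : Fin n → K} {a b : Fin n} (hab : a < b)
    (h : x a = x b) : pairProd (schurMatrix x) = 0 :=
  prod_eq_zero (mem_univ a) <|
    prod_eq_zero (mem_Ioi.2 hab) (by simp [schurMatrix, schurRatio, h])

lemma sum_neg_one_pow_mul_pairProd_schurMatrix [NeZero (2 : K)] (y : Fin (2 * n + 1) → K)
    (hy : Function.Injective y) (hy₀ : ∀ a b, y a + y b ≠ 0) (t : K) (ht : ∀ c, t + y c ≠ 0) :
    ∑ q : Fin (2 * n + 1), (-1) ^ (q : ℕ) * schurRatio t (y q) *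
        pairProd (schurMatrix (y ∘ q.succAbove)) =
      (∏ q, schurRatio t (y q)) * pairProd (schurMatrix y) := by
  have hrow : ∀ q : Fin (2 * n + 1),
      (-1) ^ (q : ℕ) * pairProd (schurMatrix (y ∘ q.succAbove)) =
        (∏ c ∈ univ.erase q, (schurRatio (y q) (y c))⁻¹) * pairProd (schurMatrix y) := by
    intro q
    have hD : ∏ j, schurRatio (y q) (y (q.succAbove j)) ≠ 0 := prod_ne_zero_iff.2 fun j _ =>
      div_ne_zero (sub_ne_zero.2 (hy.ne (q.succAbove_ne j).symm)) (hy₀ _ _)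
    have herase : univ.erase q = univ.map q.succAboveEmb := by
      rw [Fin.univ_succAbove _ q, erase_cons]
    rw [pairProd_schurMatrix_eq_succAbove y q, herase, prod_map, prod_inv_distrib]
    simp only [Fin.coe_succAboveEmb]
    field_simp
  rw [← sum_schurRatio_mul_prod_inv_of_odd y univ (by simp) hy.injOn
    (fun c _ h => hy₀ c c (by rw [h, add_zero])) t fun c _ => ht c, sum_mul]
  refine sum_congr rfl fun q _ => ?_
  rw [mul_assoc (schurRatio t (y q)), ← hrow]
  ring

theorem pfaffianSum_schurMatrix_of_injective [NeZero (2 : K)] :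
    ∀ {k : ℕ} (x : Fin (2 * k) → K), Function.Injective x → (∀ a b, x a + x b ≠ 0) →
      pfaffianSum (schurMatrix x) = 2 ^ k * k.factorial * pairProd (schurMatrix x)
  | 0, x, _, _ => by simp [pfaffianSum, pairProd]
  | k + 1, x, hinj, hx => by
    have ih : ∀ (p : Fin (2 * k + 2)) (q : Fin (2 * k + 1)),
        pfaffianSum (schurMatrix (x ∘ p.succAbove ∘ q.succAbove)) =
          2 ^ k * k.factorial * pairProd (schurMatrix (x ∘ p.succAbove ∘ q.succAbove)) :=
      fun p q => pfaffianSum_schurMatrix_of_injective _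
        (hinj.comp (Fin.succAbove_right_injective.comp Fin.succAbove_right_injective))
        fun a b => hx _ _
    have hrow : ∀ p : Fin (2 * k + 2), ∑ q : Fin (2 * k + 1), (-1) ^ (q : ℕ) *
        schurRatio (x p) (x (p.succAbove q)) *
          pairProd (schurMatrix (x ∘ p.succAbove ∘ q.succAbove)) =
            (-1) ^ (p : ℕ) * pairProd (schurMatrix x) := fun p => by
      refine (sum_neg_one_pow_mul_pairProd_schurMatrix (x ∘ p.succAbove)
        (hinj.comp Fin.succAbove_right_injective) (fun a b => hx _ _) (x p)
          fun c => hx _ _).trans ?_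
      rw [pairProd_schurMatrix_eq_succAbove x p, ← mul_assoc, ← mul_assoc, ← pow_add,
        Even.neg_one_pow ⟨p, rfl⟩, one_mul]
      rfl
    calc pfaffianSum (schurMatrix x)
        = ∑ p : Fin (2 * k + 2), ∑ q : Fin (2 * k + 1), (-1) ^ ((p : ℕ) + q) *
            schurRatio (x p) (x (p.succAbove q)) *
              pfaffianSum (schurMatrix (x ∘ p.succAbove ∘ q.succAbove)) :=
          pfaffianSum_succ _
      _ = 2 ^ k * k.factorial * ∑ p : Fin (2 * k + 2), (-1) ^ (p : ℕ) *
            ∑ q : Fin (2 * k + 1), (-1) ^ (q : ℕ) * schurRatio (x p) (x (p.succAbove q)) *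
              pairProd (schurMatrix (x ∘ p.succAbove ∘ q.succAbove)) := by
          simp_rw [ih, mul_sum, pow_add]
          refine sum_congr rfl fun p _ => sum_congr rfl fun q _ => ?_
          ring
      _ = 2 ^ (k + 1) * (k + 1).factorial * pairProd (schurMatrix x) := by
          simp_rw [hrow, ← mul_assoc, ← pow_add, Even.neg_one_pow ⟨_, rfl⟩, one_mul, sum_const,
            card_univ, Fintype.card_fin, nsmul_eq_mul, Nat.factorial_succ]
          push_cast
          ring

theorem pfaffianSum_schurMatrix [NeZero (2 : K)] {k : ℕ} (x : Fin (2 * k) → K)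
    (hx : ∀ a b, x a + x b ≠ 0) :
    pfaffianSum (schurMatrix x) = 2 ^ k * k.factorial * pairProd (schurMatrix x) := by
  by_cases hinj : Function.Injective x
  · exact pfaffianSum_schurMatrix_of_injective x hinj hx
  obtain ⟨a, b, hxab, hab⟩ : ∃ a b, x a = x b ∧ a ≠ b := by
    simpa [Function.Injective] using hinj
  have hswap : x ∘ swap a b = x := by
    rw [comp_swap_eq_update, hxab, Function.update_eq_self, ← hxab, Function.update_eq_self]
  rw [pfaffianSum_eq_zero_of_submatrix_swap _ hab (by rw [schurMatrix_submatrix, hswap])]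
  rcases hab.lt_or_gt with h | h
  · rw [pairProd_schurMatrix_eq_zero h hxab, mul_zero]
  · rw [pairProd_schurMatrix_eq_zero h hxab.symm, mul_zero]

end SchurMatrix

end Schur

/-- **Schur's Pfaffian identity**: for real numbers `x 1, …, x (2k)` with
`x a + x b ≠ 0` for all `a, b`, the Pfaffian of the skew-symmetric matrix with entries
`(x a - x b)/(x a + x b)` equals `∏_{a < b} (x a - x b)/(x a + x b)`. -/
theorem schur_pfaffian (k : ℕ) (x : Fin (2 * k) → ℝ)
    (hx : ∀ a b, x a + x b ≠ 0) :
    pf (Matrix.of fun a b => (x a - x b) / (x a + x b)) =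
      ∏ a : Fin (2 * k), ∏ b ∈ Finset.Ioi a, (x a - x b) / (x a + x b) := by
  rw [Schur.pf_eq_pfaffianSum]
  change _ * Schur.pfaffianSum (Schur.schurMatrix x) = Schur.pairProd (Schur.schurMatrix x)
  rw [Schur.pfaffianSum_schurMatrix x hx]
  field_simp
end

section
/- Pfaffian of a block matrix with rank-one off-diagonal block (even case): let A and B be skew-symmetric real k×k matrices with k even, let U, V be column vectors of size k, and set D = U V^T. Then the Pfaffian of the 2k×2k block matrix [[A, D], [-D^T, B]] equals pf(A)·pf(B). -/
/-!
Both sides are sums over permutations. Call a slot `i` of a term of the block Pfaffian crossing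
when `σ (2i)` and `σ (2i+1)` lie in different diagonal blocks; as the upper block has even size,
there is an even number of crossing slots. Exchanging the lower-block endpoints of two crossing
slots flips the sign of `σ` but, since `D = U Vᵀ` has rank one
(`D a c * D a' c' = D a c' * D a' c`), not the product of entries, so the crossing terms cancel in
pairs. A noncrossing term is determined
by which `m` slots go to the upper block and, after relabelling these slots, by a term of `pf A`
and one of `pf B`; the `(2m).choose m` choices of slots match the normalisations `2 ^ k * k!`.
-/

open Matrix

/-- The `2k × 2k` block matrix `[[A, B], [C, D]]` built from `k × k` blocks, with rows
and columns ordered `1, …, k, k+1, …, 2k`. -/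
noncomputable def blockMat {k : ℕ} (A B C D : Matrix (Fin k) (Fin k) ℝ) :
    Matrix (Fin (2 * k)) (Fin (2 * k)) ℝ :=
  (Matrix.fromBlocks A B C D).submatrix
    (finSumFinEquiv.trans (finCongr (two_mul k).symm)).symm
    (finSumFinEquiv.trans (finCongr (two_mul k).symm)).symm

open Equiv Equiv.Perm Finset

section Frame

variable {R ι κ : Type*}

def slotPerm (e : κ × Fin 2 ≃ ι) (τ : Perm κ) : Perm ι :=
  e.permCongr (τ.prodCongr (Equiv.refl _))

theorem slotPerm_apply (e : κ × Fin 2 ≃ ι) (τ : Perm κ) (s : κ) (b : Fin 2) :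
    slotPerm e τ (e (s, b)) = e (τ s, b) := by
  simp [slotPerm, permCongr_apply]

variable [CommRing R] [Fintype ι] [DecidableEq ι] [Fintype κ]

theorem sign_slotPerm [DecidableEq κ] (e : κ × Fin 2 ≃ ι) (τ : Perm κ) :
    sign (slotPerm e τ) = 1 := by
  have : τ.prodCongr (Equiv.refl (Fin 2)) = prodCongrLeft fun _ => τ := by ext <;> rfl
  rw [slotPerm, sign_permCongr, this, sign_prodCongrLeft, Fin.prod_univ_two, Int.units_mul_self]

/-- The frame `e` pairs the indices `e (s, 0)` and `e (s, 1)` for each slot `s`. -/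
def pfaffianTerm (e : κ × Fin 2 ≃ ι) (M : Matrix ι ι R) (σ : Perm ι) : R :=
  (sign σ : ℤ) * ∏ s, M (σ (e (s, 0))) (σ (e (s, 1)))

def pfaffianSum (e : κ × Fin 2 ≃ ι) (M : Matrix ι ι R) : R :=
  ∑ σ, pfaffianTerm e M σ

theorem pfaffianTerm_prodCongr_refl_trans {κ' : Type*} [Fintype κ'] (τ : κ' ≃ κ)
    (e : κ × Fin 2 ≃ ι) (M : Matrix ι ι R) (σ : Perm ι) :
    pfaffianTerm ((τ.prodCongr (Equiv.refl _)).trans e) M σ = pfaffianTerm e M σ := by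
  simp only [pfaffianTerm, trans_apply, prodCongr_apply, Prod.map, refl_apply]
  rw [Equiv.prod_comp τ fun s => M (σ (e (s, 0))) (σ (e (s, 1)))]

theorem pfaffianTerm_mul_slotPerm [DecidableEq κ] (e : κ × Fin 2 ≃ ι) (M : Matrix ι ι R)
    (σ : Perm ι) (τ : Perm κ) :
    pfaffianTerm e M (σ * slotPerm e τ) = pfaffianTerm e M σ := by
  simp only [pfaffianTerm, Perm.sign_mul, sign_slotPerm, mul_one, Perm.mul_apply, slotPerm_apply]
  rw [Equiv.prod_comp τ fun s => M (σ (e (s, 0))) (σ (e (s, 1)))]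

theorem pfaffianSum_submatrix {ι' : Type*} [Fintype ι'] [DecidableEq ι']
    (e : κ × Fin 2 ≃ ι') (g : ι' ≃ ι) (M : Matrix ι ι R) :
    pfaffianSum e (M.submatrix g g) = pfaffianSum (e.trans g) M := by
  refine Fintype.sum_equiv g.permCongr _ _ fun σ => ?_
  simp [pfaffianTerm, sign_permCongr, permCongr_apply]

end Frame

def finPairFrame (n : ℕ) : Fin n × Fin 2 ≃ Fin (2 * n) :=
  finProdFinEquiv.trans (finCongr (Nat.mul_comm n 2))

@[simp] theorem finPairFrame_apply_val {n : ℕ} (p : Fin n × Fin 2) :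
    (finPairFrame n p : ℕ) = p.2 + 2 * p.1 := rfl

theorem pf_eq_pfaffianSum {n : ℕ} (M : Matrix (Fin (2 * n)) (Fin (2 * n)) ℝ) :
    pf M = pfaffianSum (finPairFrame n) M / (2 ^ n * n.factorial) := by
  have hn : 2 * n / 2 = n := by omega
  rw [pf, pfaffianSum, one_div_mul_eq_div]
  congr 1
  · refine Finset.sum_congr rfl fun σ _ => ?_
    rw [pfaffianTerm]
    congr 1
    refine Fintype.prod_equiv (finCongr hn) _ _ fun i => ?_
    congr 2 <;> ext <;> simp [add_comm]
  · rw [hn]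

def sumFrame {α β κA κB : Type*} (eA : κA × Fin 2 ≃ α) (eB : κB × Fin 2 ≃ β) :
    (κA ⊕ κB) × Fin 2 ≃ α ⊕ β :=
  (sumProdDistrib κA κB (Fin 2)).trans (sumCongr eA eB)

theorem finPairFrame_trans_finSumFinEquiv_symm (m : ℕ) :
    (finPairFrame (2 * m)).trans (finSumFinEquiv.trans (finCongr (two_mul (2 * m)).symm)).symm =
      ((finSumFinEquiv.trans (finCongr (two_mul m).symm)).symm.prodCongr (Equiv.refl _)).trans
        (sumFrame (finPairFrame m) (finPairFrame m)) := by
  ext ⟨i, b⟩ : 1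
  obtain ⟨j, rfl⟩ := (finSumFinEquiv.trans (finCongr (two_mul m).symm)).surjective i
  change _ = sumFrame _ _ ((finSumFinEquiv.trans (finCongr (two_mul m).symm)).symm
    ((finSumFinEquiv.trans (finCongr (two_mul m).symm)) j), b)
  rw [symm_apply_apply, trans_apply, symm_apply_eq]
  rcases j with a | a
  · ext; simp [sumFrame]
  · ext; simp [sumFrame]; ring

theorem pfaffianSum_blockMat {m : ℕ} (A B C D : Matrix (Fin (2 * m)) (Fin (2 * m)) ℝ) :
    pfaffianSum (finPairFrame (2 * m)) (blockMat A B C D) =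
      pfaffianSum (sumFrame (finPairFrame m) (finPairFrame m)) (Matrix.fromBlocks A B C D) := by
  rw [blockMat, pfaffianSum_submatrix, finPairFrame_trans_finSumFinEquiv_symm]
  simp only [pfaffianSum, pfaffianTerm_prodCongr_refl_trans]

noncomputable def distinctPair {κ : Type*} (C : Finset κ) (h : 1 < C.card) : κ × κ :=
  ((one_lt_card_iff.1 h).choose, (one_lt_card_iff.1 h).choose_spec.choose)

theorem distinctPair_spec {κ : Type*} (C : Finset κ) (h : 1 < C.card) :
    (distinctPair C h).1 ∈ C ∧ (distinctPair C h).2 ∈ C ∧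
      (distinctPair C h).1 ≠ (distinctPair C h).2 :=
  (one_lt_card_iff.1 h).choose_spec.choose_spec

theorem distinctPair_congr {κ : Type*} {C C' : Finset κ} (hC : C = C') (h : 1 < C.card)
    (h' : 1 < C'.card) : distinctPair C h = distinctPair C' h' := by
  subst hC; rfl

theorem prod_eq_prod_of_eq_off_pair {κ M : Type*} [Fintype κ] [DecidableEq κ] [CommMonoid M]
    {f g : κ → M} {s t : κ} (hst : s ≠ t) (hpair : f s * f t = g s * g t)
    (hoff : ∀ r, r ≠ s → r ≠ t → f r = g r) : ∏ r, f r = ∏ r, g r := by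
  rw [← prod_mul_prod_compl {s, t}, ← prod_mul_prod_compl {s, t} g, prod_pair hst,
    prod_pair hst, hpair]
  congr 1
  refine prod_congr rfl fun r hr => ?_
  simp only [mem_compl, mem_insert, mem_singleton, not_or] at hr
  exact hoff r hr.1 hr.2

section Crossing

variable {R α β κ : Type*} (e : κ × Fin 2 ≃ α ⊕ β)

def rightPos (σ : Perm (α ⊕ β)) (s : κ) : α ⊕ β :=
  e (s, if (σ (e (s, 0))).isLeft then 1 else 0)

def leftPos (σ : Perm (α ⊕ β)) (s : κ) : α ⊕ β :=
  e (s, if (σ (e (s, 0))).isLeft then 0 else 1)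

theorem leftPos_ne_rightPos (σ : Perm (α ⊕ β)) (s t : κ) :
    leftPos e σ s ≠ rightPos e σ t := by
  intro h
  obtain ⟨rfl, hb⟩ := Prod.mk.inj (e.injective h)
  split_ifs at hb <;> simp_all

theorem rightPos_ne_rightPos (σ : Perm (α ⊕ β)) {s t : κ} (hst : s ≠ t) :
    rightPos e σ s ≠ rightPos e σ t :=
  fun h => hst (Prod.mk.inj (e.injective h)).1

theorem rightPos_congr {σ σ' : Perm (α ⊕ β)} (h : ∀ x, (σ' x).isLeft = (σ x).isLeft) :
    rightPos e σ' = rightPos e σ := by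
  ext1 s; simp only [rightPos, h]

theorem leftPos_congr {σ σ' : Perm (α ⊕ β)} (h : ∀ x, (σ' x).isLeft = (σ x).isLeft) :
    leftPos e σ' = leftPos e σ := by
  ext1 s; simp only [leftPos, h]

variable [Fintype κ]

def crossingSlots (σ : Perm (α ⊕ β)) : Finset κ :=
  univ.filter fun s => (σ (e (s, 0))).isLeft ≠ (σ (e (s, 1))).isLeft

def leftSlots (σ : Perm (α ⊕ β)) : Finset κ :=
  univ.filter fun s => (σ (e (s, 0))).isLeft

theorem crossingSlots_congr {σ σ' : Perm (α ⊕ β)}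
    (h : ∀ x, (σ' x).isLeft = (σ x).isLeft) :
    crossingSlots e σ' = crossingSlots e σ := by
  simp only [crossingSlots, h]

theorem isLeft_rightPos {σ : Perm (α ⊕ β)} {s : κ} (hs : s ∈ crossingSlots e σ) :
    (σ (rightPos e σ s)).isLeft = false := by
  simp only [crossingSlots, mem_filter, mem_univ, true_and] at hs
  unfold rightPos
  split_ifs with h <;> simp_all

theorem fromBlocks_vecMulVec_apply_of_crossing [CommRing R] (A : Matrix α α R)
    (B : Matrix β β R) (U : α → R) (V : β → R) {σ : Perm (α ⊕ β)} {s : κ}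
    (hs : s ∈ crossingSlots e σ) :
    Matrix.fromBlocks A (Matrix.vecMulVec U V) (-(Matrix.vecMulVec U V)ᵀ) B
        (σ (e (s, 0))) (σ (e (s, 1))) =
      (if (σ (e (s, 0))).isLeft then 1 else -1) *
        (Sum.elim U (0 : β → R) (σ (leftPos e σ s)) *
          Sum.elim (0 : α → R) V (σ (rightPos e σ s))) := by
  simp only [crossingSlots, mem_filter, mem_univ, true_and] at hs
  unfold leftPos rightPos
  rcases h0 : σ (e (s, 0)) with a | c <;> rcases h1 : σ (e (s, 1)) with a' | c' <;>
    simp_all [Matrix.vecMulVec_apply, mul_comm]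

variable [DecidableEq α] [DecidableEq β]

theorem isLeft_mul_swap_rightPos_apply {σ : Perm (α ⊕ β)} {s t : κ}
    (hs : s ∈ crossingSlots e σ) (ht : t ∈ crossingSlots e σ) (x : α ⊕ β) :
    ((σ * swap (rightPos e σ s) (rightPos e σ t)) x).isLeft = (σ x).isLeft := by
  rw [Perm.mul_apply, swap_apply_def]
  split_ifs with h1 h2
  · rw [isLeft_rightPos e ht, h1, isLeft_rightPos e hs]
  · rw [isLeft_rightPos e hs, h2, isLeft_rightPos e ht]
  · rfl

/-- The two crossing slots whose lower-block endpoints are exchanged are chosen from the set of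
crossing slots alone, which the exchange does not change; this makes it an involution. -/
noncomputable def crossingSwap (σ : Perm (α ⊕ β)) (h : 1 < (crossingSlots e σ).card) :
    Perm (α ⊕ β) :=
  σ * swap (rightPos e σ (distinctPair _ h).1) (rightPos e σ (distinctPair _ h).2)

theorem isLeft_crossingSwap_apply (σ : Perm (α ⊕ β)) (h : 1 < (crossingSlots e σ).card)
    (x : α ⊕ β) : (crossingSwap e σ h x).isLeft = (σ x).isLeft :=
  isLeft_mul_swap_rightPos_apply e (distinctPair_spec _ h).1 (distinctPair_spec _ h).2.1 x

theorem crossingSwap_crossingSwap (σ : Perm (α ⊕ β)) (h : 1 < (crossingSlots e σ).card)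
    (h' : 1 < (crossingSlots e (crossingSwap e σ h)).card) :
    crossingSwap e (crossingSwap e σ h) h' = σ := by
  have hside := isLeft_crossingSwap_apply e σ h
  rw [crossingSwap, distinctPair_congr (crossingSlots_congr e hside) h' h, rightPos_congr e hside,
    crossingSwap, mul_swap_mul_self]

end Crossing

section CrossingCancel

variable {R α β κ : Type*} (e : κ × Fin 2 ≃ α ⊕ β)
  [Fintype κ] [Fintype α] [Fintype β]

theorem sum_isLeft_toNat (σ : Perm (α ⊕ β)) :
    ∑ s, ((σ (e (s, 0))).isLeft.toNat + (σ (e (s, 1))).isLeft.toNat) = Fintype.card α := by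
  have hα : ∑ x : α ⊕ β, x.isLeft.toNat = Fintype.card α := by simp [Fintype.sum_sum_type]
  rw [← hα, ← (e.trans σ).sum_comp, Fintype.sum_prod_type]
  simp [Fin.sum_univ_two]

theorem even_card_crossingSlots (hα : Even (Fintype.card α)) (σ : Perm (α ⊕ β)) :
    Even (crossingSlots e σ).card := by
  have hsplit : ∀ x y : Bool,
      x.toNat + y.toNat = (if x ≠ y then 1 else 0) + 2 * (x && y).toNat := by
    decide
  rw [← sum_isLeft_toNat e σ] at hα
  simp only [hsplit, sum_add_distrib, ← mul_sum, ← card_filter] at hα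
  rwa [Nat.even_add, iff_true_intro (even_two_mul _), iff_true] at hα

theorem two_mul_card_leftSlots {σ : Perm (α ⊕ β)} (hσ : ¬(crossingSlots e σ).Nonempty) :
    2 * (leftSlots e σ).card = Fintype.card α := by
  have hsides : ∀ s, (σ (e (s, 1))).isLeft = (σ (e (s, 0))).isLeft := fun s => by
    by_contra h
    exact hσ ⟨s, by simp [crossingSlots, Ne.symm h]⟩
  rw [← sum_isLeft_toNat e σ, leftSlots, card_filter, mul_sum]
  refine sum_congr rfl fun s _ => ?_
  rw [hsides]
  cases (σ (e (s, 0))).isLeft <;> rfl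

variable [DecidableEq α] [DecidableEq β] [DecidableEq κ] [CommRing R]

theorem pfaffianTerm_mul_swap_rightPos (A : Matrix α α R)
    (B : Matrix β β R) (U : α → R) (V : β → R) {σ : Perm (α ⊕ β)} {s t : κ}
    (hs : s ∈ crossingSlots e σ) (ht : t ∈ crossingSlots e σ) (hst : s ≠ t) :
    pfaffianTerm e (Matrix.fromBlocks A (Matrix.vecMulVec U V) (-(Matrix.vecMulVec U V)ᵀ) B)
        (σ * swap (rightPos e σ s) (rightPos e σ t)) =
      -pfaffianTerm e (Matrix.fromBlocks A (Matrix.vecMulVec U V) (-(Matrix.vecMulVec U V)ᵀ) B)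
        σ := by
  set M := Matrix.fromBlocks A (Matrix.vecMulVec U V) (-(Matrix.vecMulVec U V)ᵀ) B
  set σ' := σ * swap (rightPos e σ s) (rightPos e σ t)
  have hside : ∀ x, (σ' x).isLeft = (σ x).isLeft := isLeft_mul_swap_rightPos_apply e hs ht
  have hs' : s ∈ crossingSlots e σ' := crossingSlots_congr e hside ▸ hs
  have ht' : t ∈ crossingSlots e σ' := crossingSlots_congr e hside ▸ ht
  have hfix : ∀ x, x ≠ rightPos e σ s → x ≠ rightPos e σ t → σ' x = σ x :=
    fun x hxs hxt => by rw [Perm.mul_apply, swap_apply_of_ne_of_ne hxs hxt]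
  have hpair : M (σ' (e (s, 0))) (σ' (e (s, 1))) * M (σ' (e (t, 0))) (σ' (e (t, 1))) =
      M (σ (e (s, 0))) (σ (e (s, 1))) * M (σ (e (t, 0))) (σ (e (t, 1))) := by
    simp only [M, fromBlocks_vecMulVec_apply_of_crossing e A B U V hs',
      fromBlocks_vecMulVec_apply_of_crossing e A B U V ht',
      fromBlocks_vecMulVec_apply_of_crossing e A B U V hs,
      fromBlocks_vecMulVec_apply_of_crossing e A B U V ht, hside, leftPos_congr e hside,
      rightPos_congr e hside]
    rw [hfix _ (leftPos_ne_rightPos e σ s s) (leftPos_ne_rightPos e σ s t),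
      hfix _ (leftPos_ne_rightPos e σ t s) (leftPos_ne_rightPos e σ t t),
      Perm.mul_apply, swap_apply_left, Perm.mul_apply, swap_apply_right]
    ring
  have hprod : ∏ r, M (σ' (e (r, 0))) (σ' (e (r, 1))) =
      ∏ r, M (σ (e (r, 0))) (σ (e (r, 1))) := by
    refine prod_eq_prod_of_eq_off_pair hst hpair fun r hrs hrt => ?_
    have hne : ∀ b, e (r, b) ≠ rightPos e σ s ∧ e (r, b) ≠ rightPos e σ t := fun b =>
      ⟨fun h => hrs (Prod.mk.inj (e.injective h)).1,
        fun h => hrt (Prod.mk.inj (e.injective h)).1⟩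
    rw [hfix _ (hne 0).1 (hne 0).2, hfix _ (hne 1).1 (hne 1).2]
  rw [pfaffianTerm, pfaffianTerm, hprod, Perm.sign_mul, sign_swap (rightPos_ne_rightPos e σ hst)]
  push_cast
  ring

theorem sum_pfaffianTerm_crossing_eq_zero (hα : Even (Fintype.card α)) (A : Matrix α α R)
    (B : Matrix β β R) (U : α → R) (V : β → R) :
    ∑ σ ∈ univ.filter fun σ => (crossingSlots e σ).Nonempty,
      pfaffianTerm e (Matrix.fromBlocks A (Matrix.vecMulVec U V) (-(Matrix.vecMulVec U V)ᵀ) B) σ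
      = 0 := by
  have htwo : ∀ σ ∈ univ.filter fun σ => (crossingSlots e σ).Nonempty,
      1 < (crossingSlots e σ).card := fun σ hσ => by
    obtain ⟨k, hk⟩ := even_card_crossingSlots e hα σ
    have := (mem_filter.1 hσ).2.card_pos
    omega
  refine sum_involution (fun σ hσ => crossingSwap e σ (htwo σ hσ)) (fun σ hσ => ?_)
    (fun σ hσ _ => ?_) (fun σ hσ => ?_) (fun σ hσ => crossingSwap_crossingSwap e σ _ _)
  · obtain ⟨hs, ht, hst⟩ := distinctPair_spec _ (htwo σ hσ)
    rw [crossingSwap, pfaffianTerm_mul_swap_rightPos e A B U V hs ht hst, add_neg_cancel]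
  · obtain ⟨-, -, hst⟩ := distinctPair_spec _ (htwo σ hσ)
    rw [Ne, crossingSwap, mul_eq_left, swap_eq_one_iff]
    exact rightPos_ne_rightPos e σ hst
  · simpa [crossingSlots_congr e (isLeft_crossingSwap_apply e σ _)] using hσ

end CrossingCancel

section NonCrossing

variable {R α β κ κA κB : Type*} [Fintype α] [Fintype β] [DecidableEq α] [DecidableEq β]
  [Fintype κ]

def splitFiber (e : κ × Fin 2 ≃ α ⊕ β) (P : κ → Bool) : Finset (Perm (α ⊕ β)) :=
  univ.filter fun σ => ∀ p, (σ (e p)).isLeft = P p.1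

theorem mem_splitFiber_iff_mul_slotPerm (e : κ × Fin 2 ≃ α ⊕ β) (P : κ → Bool)
    (τ : Perm κ) (σ : Perm (α ⊕ β)) :
    σ ∈ splitFiber e P ↔ σ * slotPerm e τ ∈ splitFiber e (P ∘ τ) := by
  simp only [splitFiber, mem_filter, mem_univ, true_and, Prod.forall, Perm.mul_apply,
    slotPerm_apply, Function.comp_apply]
  exact ⟨fun h s b => h (τ s) b, fun h s b => by simpa using h (τ.symm s) b⟩

theorem mem_splitFiber_iff_crossingSlots_leftSlots [DecidableEq κ] (e : κ × Fin 2 ≃ α ⊕ β)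
    (S : Finset κ) (σ : Perm (α ⊕ β)) :
    σ ∈ splitFiber e (· ∈ S) ↔ ¬(crossingSlots e σ).Nonempty ∧ leftSlots e σ = S := by
  rw [not_nonempty_iff_eq_empty, crossingSlots, leftSlots, filter_eq_empty_iff, Finset.ext_iff]
  simp only [splitFiber, mem_filter, mem_univ, true_and, not_not, Prod.forall, Fin.forall_fin_two,
    forall_const]
  constructor
  · intro h
    exact ⟨fun s => by rw [(h s).1, (h s).2], fun s => by simp [(h s).1]⟩
  · intro ⟨hc, hl⟩ s
    have h0 : (σ (e (s, 0))).isLeft = decide (s ∈ S) := by simp [← hl s]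
    exact ⟨h0, (@hc s).symm.trans h0⟩

variable [Fintype κA] [Fintype κB]

theorem splitFiber_sumFrame_isLeft (eA : κA × Fin 2 ≃ α) (eB : κB × Fin 2 ≃ β) :
    splitFiber (sumFrame eA eB) Sum.isLeft =
      univ.image fun p : Perm α × Perm β => Perm.sumCongr p.1 p.2 := by
  ext σ
  simp only [splitFiber, mem_filter, mem_univ, true_and, mem_image, Prod.exists]
  constructor
  · intro h
    have hinl : Set.MapsTo σ (Set.range Sum.inl) (Set.range Sum.inl) := by
      rintro _ ⟨a, rfl⟩
      have := h (Sum.inl (eA.symm a).1, (eA.symm a).2)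
      simp only [sumFrame, trans_apply, sumProdDistrib_apply_left, Equiv.sumCongr_apply,
        Sum.map_inl, Prod.mk.eta, apply_symm_apply, Sum.isLeft_inl, Sum.isLeft_iff] at this
      exact this.imp fun _ h => h.symm
    obtain ⟨⟨σA, σB⟩, rfl⟩ := mem_sumCongrHom_range_of_perm_mapsTo_inl hinl
    exact ⟨σA, σB, rfl⟩
  · rintro ⟨σA, σB, rfl⟩ ⟨s | s, b⟩ <;> simp [sumFrame]

variable [CommRing R]

theorem pfaffianTerm_sumFrame_sumCongr (eA : κA × Fin 2 ≃ α) (eB : κB × Fin 2 ≃ β)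
    (A : Matrix α α R) (B : Matrix β β R) (C : Matrix α β R) (D : Matrix β α R)
    (σA : Perm α) (σB : Perm β) :
    pfaffianTerm (sumFrame eA eB) (Matrix.fromBlocks A C D B) (Perm.sumCongr σA σB) =
      pfaffianTerm eA A σA * pfaffianTerm eB B σB := by
  simp only [pfaffianTerm, sign_sumCongr, Fintype.prod_sum_type, sumFrame, trans_apply,
    sumProdDistrib_apply_left, sumProdDistrib_apply_right, Equiv.sumCongr_apply, Sum.map_inl,
    Sum.map_inr, Matrix.fromBlocks_apply₁₁, Matrix.fromBlocks_apply₂₂]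
  push_cast
  ring

theorem sum_splitFiber_sumFrame_isLeft (eA : κA × Fin 2 ≃ α) (eB : κB × Fin 2 ≃ β)
    (A : Matrix α α R) (B : Matrix β β R) (C : Matrix α β R) (D : Matrix β α R) :
    ∑ σ ∈ splitFiber (sumFrame eA eB) Sum.isLeft,
        pfaffianTerm (sumFrame eA eB) (Matrix.fromBlocks A C D B) σ =
      pfaffianSum eA A * pfaffianSum eB B := by
  have hinj : Function.Injective fun p : Perm α × Perm β => Perm.sumCongr p.1 p.2 :=
    fun _ _ h => sumCongrHom_injective h
  rw [splitFiber_sumFrame_isLeft, sum_image hinj.injOn, ← univ_product_univ, sum_product,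
    pfaffianSum, pfaffianSum, sum_mul_sum]
  simp only [pfaffianTerm_sumFrame_sumCongr]

variable [DecidableEq κA] [DecidableEq κB]

theorem exists_perm_mem_iff_isLeft (S : Finset (κA ⊕ κB)) (hS : S.card = Fintype.card κA) :
    ∃ τ : Perm (κA ⊕ κB), ∀ s, decide (τ s ∈ S) = s.isLeft := by
  have hSc : Fintype.card κB = Fintype.card {s // s ∉ S} := by
    simp [Fintype.card_subtype_compl, hS]
  refine ⟨(Equiv.sumCongr (Fintype.equivOfCardEq (by simpa using hS.symm))
    (Fintype.equivOfCardEq hSc)).trans (sumCompl (· ∈ S)), ?_⟩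
  rintro (s | s)
  · simp
  · simpa using (Fintype.equivOfCardEq hSc s).2

theorem sum_splitFiber_sumFrame (eA : κA × Fin 2 ≃ α) (eB : κB × Fin 2 ≃ β)
    (A : Matrix α α R) (B : Matrix β β R) (C : Matrix α β R) (D : Matrix β α R)
    (S : Finset (κA ⊕ κB)) (hS : S.card = Fintype.card κA) :
    ∑ σ ∈ splitFiber (sumFrame eA eB) (· ∈ S),
        pfaffianTerm (sumFrame eA eB) (Matrix.fromBlocks A C D B) σ =
      pfaffianSum eA A * pfaffianSum eB B := by
  obtain ⟨τ, hτ⟩ := exists_perm_mem_iff_isLeft S hS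
  rw [← sum_splitFiber_sumFrame_isLeft eA eB A B C D, ← funext hτ]
  exact sum_equiv (Equiv.mulRight (slotPerm _ τ)) (mem_splitFiber_iff_mul_slotPerm _ _ τ)
    fun σ _ => (pfaffianTerm_mul_slotPerm _ _ σ τ).symm

theorem sum_pfaffianTerm_noncrossing (eA : κA × Fin 2 ≃ α) (eB : κB × Fin 2 ≃ β)
    (A : Matrix α α R) (B : Matrix β β R) (C : Matrix α β R) (D : Matrix β α R) :
    ∑ σ ∈ univ.filter fun σ => ¬(crossingSlots (sumFrame eA eB) σ).Nonempty,
        pfaffianTerm (sumFrame eA eB) (Matrix.fromBlocks A C D B) σ =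
      (Fintype.card κA + Fintype.card κB).choose (Fintype.card κA) *
        (pfaffianSum eA A * pfaffianSum eB B) := by
  have hcard : ∀ σ ∈ univ.filter fun σ => ¬(crossingSlots (sumFrame eA eB) σ).Nonempty,
      leftSlots (sumFrame eA eB) σ ∈ powersetCard (Fintype.card κA) univ := fun σ hσ => by
    have h := two_mul_card_leftSlots (sumFrame eA eB) (mem_filter.1 hσ).2
    rw [Fintype.card_congr eA.symm, Fintype.card_prod, Fintype.card_fin] at h
    simp only [mem_powersetCard, subset_univ, true_and]
    omega
  have hfiber : ∀ S, (univ.filter fun σ => ¬(crossingSlots (sumFrame eA eB) σ).Nonempty).filter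
      (fun σ => leftSlots (sumFrame eA eB) σ = S) = splitFiber (sumFrame eA eB) (· ∈ S) := by
    intro S
    ext σ
    rw [mem_splitFiber_iff_crossingSlots_leftSlots, filter_filter, mem_filter]
    simp
  rw [← sum_fiberwise_of_maps_to hcard]
  simp only [hfiber]
  rw [sum_congr rfl fun S hS => sum_splitFiber_sumFrame eA eB A B C D S (mem_powersetCard.1 hS).2,
    sum_const, card_powersetCard, card_univ, Fintype.card_sum, nsmul_eq_mul]

theorem pfaffianSum_sumFrame_fromBlocks_vecMulVec (eA : κA × Fin 2 ≃ α)
    (eB : κB × Fin 2 ≃ β) (A : Matrix α α R) (B : Matrix β β R) (U : α → R)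
    (V : β → R) :
    pfaffianSum (sumFrame eA eB)
        (Matrix.fromBlocks A (Matrix.vecMulVec U V) (-(Matrix.vecMulVec U V)ᵀ) B) =
      (Fintype.card κA + Fintype.card κB).choose (Fintype.card κA) *
        (pfaffianSum eA A * pfaffianSum eB B) := by
  have hα : Even (Fintype.card α) := by
    rw [Fintype.card_congr eA.symm, Fintype.card_prod, Fintype.card_fin]
    exact even_two.mul_left _
  rw [pfaffianSum, ← sum_filter_add_sum_filter_not univ
      fun σ => (crossingSlots (sumFrame eA eB) σ).Nonempty,
    sum_pfaffianTerm_crossing_eq_zero _ hα, zero_add, sum_pfaffianTerm_noncrossing]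

end NonCrossing

theorem pfaffian_block_rank_one_even_general (m : ℕ)
    (A B : Matrix (Fin (2 * m)) (Fin (2 * m)) ℝ)
    (U V : Fin (2 * m) → ℝ) :
    pf (blockMat A (Matrix.of fun i j => U i * V j)
        (-(Matrix.of fun i j => U i * V j)ᵀ) B) = pf A * pf B := by
  rw [pf_eq_pfaffianSum, pf_eq_pfaffianSum A, pf_eq_pfaffianSum B, pfaffianSum_blockMat]
  change pfaffianSum _ (Matrix.fromBlocks A (Matrix.vecMulVec U V) (-(Matrix.vecMulVec U V)ᵀ) B)
    / _ = _
  have hfac : ((m + m).choose m : ℝ) * m.factorial * m.factorial = (2 * m).factorial := by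
    rw [two_mul]; exact_mod_cast Nat.add_choose_mul_factorial_mul_factorial m m
  have hchoose : ((m + m).choose m : ℝ) ≠ 0 := by exact_mod_cast (Nat.choose_pos (by omega)).ne'
  have hpow : (2 : ℝ) ^ (2 * m) = 2 ^ m * 2 ^ m := by rw [two_mul, pow_add]
  rw [pfaffianSum_sumFrame_fromBlocks_vecMulVec, Fintype.card_fin, ← hfac, hpow]
  field_simp

/-- **Pfaffian of a block matrix with rank-one off-diagonal block (even case)**: for
skew-symmetric `k × k` matrices `A`, `B` with `k = 2m` even, vectors `U`, `V` and
`D = U Vᵀ`, one has `pf [[A, D], [-Dᵀ, B]] = pf A * pf B`. -/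
theorem pfaffian_block_rank_one_even (m : ℕ)
    (A B : Matrix (Fin (2 * m)) (Fin (2 * m)) ℝ)
    (hA : Aᵀ = -A) (hB : Bᵀ = -B) (U V : Fin (2 * m) → ℝ) :
    pf (blockMat A (Matrix.of fun i j => U i * V j)
        (-(Matrix.of fun i j => U i * V j)ᵀ) B) = pf A * pf B :=
  pfaffian_block_rank_one_even_general m A B U V
end

section
/- If M is any n×n matrix, B and C are skew-symmetric n×n matrices, and U = w w^T is a symmetric rank-one n×n matrix, and the 2n×2n matrix [[M, B], [C+U, M^T]] has eigenvector (v_1, v_2) with eigenvalue λ, then U v_1 = 0, so (v_1, v_2) is also an eigenvector of [[M, B], [C, M^T]] with eigenvalue λ. -/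
open Matrix

/-- Quadratic form of a skew matrix vanishes. -/
lemma skew_quad {n : ℕ} (A : Matrix (Fin n) (Fin n) ℝ) (hA : Aᵀ = -A)
    (x : Fin n → ℝ) : x ⬝ᵥ A.mulVec x = 0 := by
  have h : x ⬝ᵥ A.mulVec x = -(x ⬝ᵥ A.mulVec x) := by
    calc x ⬝ᵥ A.mulVec x = A.vecMul x ⬝ᵥ x := dotProduct_mulVec x A x
    _ = (Aᵀ).mulVec x ⬝ᵥ x := by rw [mulVec_transpose]
    _ = ((-A).mulVec x) ⬝ᵥ x := by rw [hA]
    _ = -(A.mulVec x ⬝ᵥ x) := by rw [neg_mulVec, neg_dotProduct]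
    _ = -(x ⬝ᵥ A.mulVec x) := by rw [dotProduct_comm]
  linarith

/-- If `[[M, B], [C + U, Mᵀ]]` (with `B`, `C` skew-symmetric and `U = w wᵀ` a
symmetric rank-one matrix) has eigenvector `(v₁, v₂)` with eigenvalue `λ`, then
`U v₁ = 0`, so `(v₁, v₂)` is also an eigenvector of `[[M, B], [C, Mᵀ]]` with the same
eigenvalue. -/
theorem rank_one_perturbation_eigenvector (n : ℕ)
    (M B C : Matrix (Fin n) (Fin n) ℝ)
    (hB : Bᵀ = -B) (hC : Cᵀ = -C)
    (w : Fin n → ℝ) (U : Matrix (Fin n) (Fin n) ℝ)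
    (hU : U = Matrix.of fun i j => w i * w j)
    (v₁ v₂ : Fin n → ℝ) (lam : ℝ)
    (h₁ : M.mulVec v₁ + B.mulVec v₂ = lam • v₁)
    (h₂ : (C + U).mulVec v₁ + Mᵀ.mulVec v₂ = lam • v₂) :
    U.mulVec v₁ = 0 ∧
      M.mulVec v₁ + B.mulVec v₂ = lam • v₁ ∧
      C.mulVec v₁ + Mᵀ.mulVec v₂ = lam • v₂ := by
  have hUv : U.mulVec v₁ = (w ⬝ᵥ v₁) • w := by
    subst hU
    funext i
    simp only [mulVec, dotProduct, of_apply, Pi.smul_apply, smul_eq_mul]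
    rw [Finset.sum_mul]
    exact Finset.sum_congr rfl fun j _ => by ring
  -- dot h₁ with v₂
  have e1 : v₂ ⬝ᵥ (M.mulVec v₁) = lam * (v₂ ⬝ᵥ v₁) := by
    have := congrArg (fun x => v₂ ⬝ᵥ x) h₁
    simp only [dotProduct_add, dotProduct_smul, smul_eq_mul] at this
    rw [skew_quad B hB v₂, add_zero] at this
    exact this
  -- dot h₂ with v₁
  have e2 : v₁ ⬝ᵥ (U.mulVec v₁) + v₁ ⬝ᵥ (Mᵀ.mulVec v₂) = lam * (v₁ ⬝ᵥ v₂) := by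
    have := congrArg (fun x => v₁ ⬝ᵥ x) h₂
    simp only [add_mulVec, dotProduct_add, dotProduct_smul, smul_eq_mul] at this
    rw [skew_quad C hC v₁, zero_add] at this
    linarith
  have e3 : v₁ ⬝ᵥ (Mᵀ.mulVec v₂) = v₂ ⬝ᵥ (M.mulVec v₁) := by
    rw [mulVec_transpose, dotProduct_comm, ← dotProduct_mulVec]
  have hquad : v₁ ⬝ᵥ (U.mulVec v₁) = 0 := by
    rw [e3, e1, dotProduct_comm v₂ v₁] at e2
    linarith
  have hw : w ⬝ᵥ v₁ = 0 := by
    rw [hUv, dotProduct_smul, smul_eq_mul, dotProduct_comm] at hquad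
    rw [dotProduct_comm] at hquad
    exact mul_self_eq_zero.mp hquad
  have hU0 : U.mulVec v₁ = 0 := by rw [hUv, hw, zero_smul]
  refine ⟨hU0, h₁, ?_⟩
  rw [add_mulVec, hU0, add_zero] at h₂
  exact h₂
end

section
/- Simplification of the paired h-factors: define e(w_1,w_2;n_1,n_2) = ((1-τ^{n_1} w_1 w_2)(1-τ^{n_2} w_1 w_2)) / ((1-w_1 w_2)(1-τ^{n_1+n_2} w_1 w_2)), h_1(w_1,w_2;n_1,n_2) = ((w_1 w_2;τ)_∞ (τ^{n_1+n_2} w_1 w_2;τ)_∞)/((τ^{n_1} w_1 w_2;τ)_∞ (τ^{n_2} w_1 w_2;τ)_∞) and h_2(w_a,w_b;n_a,n_b) = ((w_a τ^{n_a} - w_b τ^{n_b})(w_b - w_a))/((w_a τ^{n_a} - w_b)(w_b τ^{n_b} - w_a)). Then for any complex w_1, w_2 and nonnegative integers n_1, n_2 for which both sides are defined, h_1(w_1,w_2;n_1,n_2) · h_1(τ^{-n_1}/w_1, τ^{-n_2}/w_2; n_1,n_2) · h_2(τ^{-n_1}/w_1, w_2; n_1,n_2) · h_2(w_1, τ^{-n_2}/w_2;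 n_1,n_2) = τ^{-n_1 n_2} · e(w_1,w_2;n_1,n_2). -/
/-!
With `a = w₁ w₂`, the Pochhammer quotient `𝔥₁(w₁, w₂)` collapses to the finite product
`∏_{j < n₁} r(j)`, where `r(j) = (1 - τʲ a) / (1 - τ^{n₂+j} a)`. The reflected point has
`w₁' w₂' = (τ^{n₁+n₂} a)⁻¹`, and reversing the order `j ↦ n₁ - 1 - j` of its product gives
`𝔥₁(w₁', w₂') = τ^{-n₁ n₂} ∏_{j < n₁} r(j + 1)⁻¹`. The two `𝔥₁` factors therefore telescope to
`τ^{-n₁ n₂} r(0) / r(n₁) = τ^{-n₁ n₂} / 𝔢`, while each `𝔥₂` factor is a rational function equal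
to `𝔢`.
-/

/-- The infinite q-Pochhammer symbol `(a; q)_∞ = ∏_{k=0}^∞ (1 - q^k a)`. -/
noncomputable def pochinf (a q : ℂ) : ℂ := ∏' k : ℕ, (1 - q ^ k * a)

/-- `𝔢(w₁,w₂;n₁,n₂)`. -/
noncomputable def mfe (t w₁ w₂ : ℂ) (n₁ n₂ : ℕ) : ℂ :=
  ((1 - t ^ n₁ * (w₁ * w₂)) * (1 - t ^ n₂ * (w₁ * w₂))) /
    ((1 - w₁ * w₂) * (1 - t ^ (n₁ + n₂) * (w₁ * w₂)))

/-- `𝔥₁(w₁,w₂;n₁,n₂)`. -/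
noncomputable def mfh₁ (t w₁ w₂ : ℂ) (n₁ n₂ : ℕ) : ℂ :=
  (pochinf (w₁ * w₂) t * pochinf (t ^ (n₁ + n₂) * (w₁ * w₂)) t) /
    (pochinf (t ^ n₁ * (w₁ * w₂)) t * pochinf (t ^ n₂ * (w₁ * w₂)) t)

/-- `𝔥₂(w₁,w₂;n₁,n₂)`. -/
noncomputable def mfh₂ (t w₁ w₂ : ℂ) (n₁ n₂ : ℕ) : ℂ :=
  ((w₁ * t ^ n₁ - w₂ * t ^ n₂) * (w₂ - w₁)) /
    ((w₁ * t ^ n₁ - w₂) * (w₂ * t ^ n₂ - w₁))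

open Finset

lemma Finset.prod_range_div_succ_of_ne_zero {G₀ : Type*} [CommGroupWithZero G₀] {f : ℕ → G₀}
    (hf : ∀ j, f j ≠ 0) (n : ℕ) : ∏ j ∈ range n, f j / f (j + 1) = f 0 / f n := by
  simpa using congrArg Units.val (prod_range_div' (fun j => Units.mk0 (f j) (hf j)) n)

section Pochhammer

variable {q : ℂ}

lemma summable_norm_neg_pow_mul (hq : ‖q‖ < 1) (a : ℂ) :
    Summable fun k : ℕ => ‖-(q ^ k * a)‖ := by
  simpa [norm_pow, mul_comm] using (summable_geometric_of_lt_one (norm_nonneg q) hq).mul_left ‖a‖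

lemma multipliable_one_sub_pow_mul (hq : ‖q‖ < 1) (a : ℂ) :
    Multipliable fun k : ℕ => 1 - q ^ k * a := by
  simpa [sub_eq_add_neg] using multipliable_one_add_of_summable (summable_norm_neg_pow_mul hq a)

lemma pochinf_ne_zero (hq : ‖q‖ < 1) {a : ℂ} (h : ∀ k : ℕ, 1 - q ^ k * a ≠ 0) :
    pochinf a q ≠ 0 := by
  simpa [pochinf, sub_eq_add_neg] using
    tprod_one_add_ne_zero_of_summable (by simpa [← sub_eq_add_neg] using h)
      (summable_norm_neg_pow_mul hq a)

lemma pochinf_eq_prod_mul_pochinf (hq : ‖q‖ < 1) (a : ℂ) (n : ℕ) :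
    pochinf a q = (∏ k ∈ range n, (1 - q ^ k * a)) * pochinf (q ^ n * a) q := by
  have shift (k : ℕ) : 1 - q ^ k * (q ^ n * a) = 1 - q ^ (k + n) * a := by
    rw [pow_add, mul_assoc]
  have hm : Multipliable fun k : ℕ => 1 - q ^ (k + n) * a :=
    (multipliable_one_sub_pow_mul hq (q ^ n * a)).congr shift
  rw [pochinf, pochinf, tprod_congr shift,
    (hm.prod_mul_tprod_nat_mul' (f := fun k => 1 - q ^ k * a))]

lemma pochinf_mul_div_eq_prod (hq : ‖q‖ < 1) {a : ℂ} (n₁ n₂ : ℕ)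
    (h : ∀ k : ℕ, 1 - q ^ k * a ≠ 0) :
    pochinf a q * pochinf (q ^ (n₁ + n₂) * a) q /
        (pochinf (q ^ n₁ * a) q * pochinf (q ^ n₂ * a) q) =
      ∏ k ∈ range n₁, (1 - q ^ k * a) / (1 - q ^ (n₂ + k) * a) := by
  have shift (m k : ℕ) : 1 - q ^ k * (q ^ m * a) = 1 - q ^ (m + k) * a := by
    rw [pow_add]; ring
  have tail_ne_zero (m : ℕ) : pochinf (q ^ m * a) q ≠ 0 :=
    pochinf_ne_zero hq fun k => shift m k ▸ h (m + k)
  have head_ne_zero : ∏ k ∈ range n₁, (1 - q ^ (n₂ + k) * a) ≠ 0 :=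
    prod_ne_zero_iff.mpr fun k _ => h (n₂ + k)
  have split_shifted : pochinf (q ^ n₂ * a) q =
      (∏ k ∈ range n₁, (1 - q ^ (n₂ + k) * a)) * pochinf (q ^ (n₁ + n₂) * a) q := by
    rw [pochinf_eq_prod_mul_pochinf hq _ n₁, pow_add, mul_assoc]
    simp only [shift]
  rw [pochinf_eq_prod_mul_pochinf hq a n₁, split_shifted, prod_div_distrib,
    div_eq_div_iff (mul_ne_zero (tail_ne_zero n₁) (mul_ne_zero head_ne_zero (tail_ne_zero _)))
      head_ne_zero]
  ring

noncomputable def pochFactorRatio (q a : ℂ) (n j : ℕ) : ℂ := (1 - q ^ j * a) / (1 - q ^ (n + j) * a)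

lemma mfh₁_eq_prod {w₁ w₂ : ℂ} (hq : ‖q‖ < 1) (n₁ n₂ : ℕ)
    (h : ∀ k : ℕ, 1 - q ^ k * (w₁ * w₂) ≠ 0) :
    mfh₁ q w₁ w₂ n₁ n₂ = ∏ j ∈ range n₁, pochFactorRatio q (w₁ * w₂) n₂ j :=
  pochinf_mul_div_eq_prod hq n₁ n₂ h

/-- Numerator and denominator both turn around via `1 - q⁻ᵐ / a = -(1 - qᵐ a) / (qᵐ a)`. -/
lemma pochFactorRatio_inv {a : ℂ} (hq : q ≠ 0) (ha : a ≠ 0) (m k n : ℕ) :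
    pochFactorRatio q (q ^ (m + k + n) * a)⁻¹ n k = (q ^ n)⁻¹ * (pochFactorRatio q a n m)⁻¹ := by
  have num :
      1 - q ^ k * (q ^ (m + k + n) * a)⁻¹ = (1 - q ^ (n + m) * a) * -(q ^ (n + m) * a)⁻¹ := by
    simp only [pow_add]; field_simp; ring
  have den : 1 - q ^ (n + k) * (q ^ (m + k + n) * a)⁻¹ = (1 - q ^ m * a) * -(q ^ m * a)⁻¹ := by
    simp only [pow_add]; field_simp; ring
  rw [pochFactorRatio, pochFactorRatio, num, den, mul_div_mul_comm, inv_div, mul_comm]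
  congr 1
  simp only [pow_add]
  field_simp

lemma prod_pochFactorRatio_inv {a : ℂ} (hq : q ≠ 0) (ha : a ≠ 0) (n₁ n₂ : ℕ) :
    ∏ k ∈ range n₁, pochFactorRatio q (q ^ (n₁ + n₂) * a)⁻¹ n₂ k =
      ((q ^ n₂) ^ n₁)⁻¹ * ∏ j ∈ range n₁, (pochFactorRatio q a n₂ (j + 1))⁻¹ := by
  rw [← prod_range_reflect, ← inv_pow, ← card_range n₁, ← prod_const, card_range,
    ← prod_mul_distrib]
  refine prod_congr rfl fun j hj => ?_
  have hsplit : n₁ + n₂ = (j + 1) + (n₁ - 1 - j) + n₂ := by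
    have := mem_range.mp hj
    omega
  rw [hsplit, pochFactorRatio_inv hq ha]

end Pochhammer

lemma mfh₂_comm (t x y : ℂ) (n₁ n₂ : ℕ) : mfh₂ t x y n₁ n₂ = mfh₂ t y x n₂ n₁ := by
  rw [mfh₂, mfh₂]
  ring

lemma mfe_comm (t w₁ w₂ : ℂ) (n₁ n₂ : ℕ) : mfe t w₁ w₂ n₁ n₂ = mfe t w₂ w₁ n₂ n₁ := by
  rw [mfe, mfe, add_comm n₂, mul_comm w₂]
  ring

lemma mfh₂_zpow_neg_div_left {t w₁ : ℂ} (ht : t ≠ 0) (hw₁ : w₁ ≠ 0) (w₂ : ℂ) (n₁ n₂ : ℕ) :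
    mfh₂ t (t ^ (-(n₁ : ℤ)) / w₁) w₂ n₁ n₂ = mfe t w₁ w₂ n₁ n₂ := by
  have hc : -(t ^ n₁ * w₁ ^ 2) ≠ 0 := by simp [ht, hw₁]
  rw [mfh₂, mfe, ← mul_div_mul_left _ _ hc, zpow_neg, zpow_natCast]
  congr 1
  · field_simp
    ring
  · rw [pow_add]
    field_simp
    ring

lemma mfh₂_zpow_neg_div_right {t w₂ : ℂ} (ht : t ≠ 0) (w₁ : ℂ) (hw₂ : w₂ ≠ 0) (n₁ n₂ : ℕ) :
    mfh₂ t w₁ (t ^ (-(n₂ : ℤ)) / w₂) n₁ n₂ = mfe t w₁ w₂ n₁ n₂ := by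
  rw [mfh₂_comm, mfh₂_zpow_neg_div_left ht hw₂, mfe_comm]

lemma mfh₁_mul_mfh₁_reciprocal {t w₁ w₂ : ℂ} (ht₀ : t ≠ 0) (ht₁ : ‖t‖ < 1) (hw₁ : w₁ ≠ 0)
    (hw₂ : w₂ ≠ 0) (n₁ n₂ : ℕ) (hnz : ∀ k : ℤ, 1 - t ^ k * (w₁ * w₂) ≠ 0) :
    mfh₁ t w₁ w₂ n₁ n₂ * mfh₁ t (t ^ (-(n₁ : ℤ)) / w₁) (t ^ (-(n₂ : ℤ)) / w₂) n₁ n₂ =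
      t ^ (-((n₁ : ℤ) * n₂)) * (mfe t w₁ w₂ n₁ n₂)⁻¹ := by
  set a := w₁ * w₂ with ha_def
  have ha : a ≠ 0 := mul_ne_zero hw₁ hw₂
  have hnat (k : ℕ) : 1 - t ^ k * a ≠ 0 := by simpa using hnz k
  have hrecip : t ^ (-(n₁ : ℤ)) / w₁ * (t ^ (-(n₂ : ℤ)) / w₂) = (t ^ (n₁ + n₂) * a)⁻¹ := by
    simp only [zpow_neg, zpow_natCast, pow_add, a]
    field_simp
  have hnat_recip (k : ℕ) : 1 - t ^ k * (t ^ (n₁ + n₂) * a)⁻¹ ≠ 0 := by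
    intro h
    apply hnz ((n₁ + n₂ : ℕ) - k : ℤ)
    rw [zpow_sub₀ ht₀, zpow_natCast, zpow_natCast]
    field_simp at h ⊢
    linear_combination -h
  have hf (j : ℕ) : pochFactorRatio t a n₂ j ≠ 0 := div_ne_zero (hnat j) (hnat (n₂ + j))
  have hends : pochFactorRatio t a n₂ 0 / pochFactorRatio t a n₂ n₁ = (mfe t w₁ w₂ n₁ n₂)⁻¹ := by
    rw [mfe, ← ha_def, pochFactorRatio, pochFactorRatio, add_comm n₁, pow_zero, one_mul, add_zero,
      inv_div, div_div_div_eq, mul_comm (1 - t ^ n₂ * a)]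
  rw [mfh₁_eq_prod ht₁ n₁ n₂ hnat, mfh₁_eq_prod ht₁ n₁ n₂ (hrecip ▸ hnat_recip), hrecip,
    prod_pochFactorRatio_inv ht₀ ha, mul_left_comm, ← prod_mul_distrib]
  simp only [← div_eq_mul_inv]
  rw [prod_range_div_succ_of_ne_zero hf, hends, zpow_neg, mul_comm (n₁ : ℤ), ← pow_mul]
  norm_cast

/-- **Simplification of the paired 𝔥-factors**:
`𝔥₁(w₁,w₂) 𝔥₁(τ^{-n₁}/w₁, τ^{-n₂}/w₂) 𝔥₂(τ^{-n₁}/w₁, w₂) 𝔥₂(w₁, τ^{-n₂}/w₂)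
  = τ^{-n₁ n₂} 𝔢(w₁,w₂)`. -/
theorem paired_h_simplification (τ : ℝ) (hτ : τ ∈ Set.Ioo (0 : ℝ) 1)
    (w₁ w₂ : ℂ) (n₁ n₂ : ℕ) (hw₁ : w₁ ≠ 0) (hw₂ : w₂ ≠ 0)
    (hnz : ∀ k : ℤ, (1 : ℂ) - (τ : ℂ) ^ k * (w₁ * w₂) ≠ 0) :
    mfh₁ (τ : ℂ) w₁ w₂ n₁ n₂ *
      mfh₁ (τ : ℂ) ((τ : ℂ) ^ (-(n₁ : ℤ)) / w₁) ((τ : ℂ) ^ (-(n₂ : ℤ)) / w₂) n₁ n₂ *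
      mfh₂ (τ : ℂ) ((τ : ℂ) ^ (-(n₁ : ℤ)) / w₁) w₂ n₁ n₂ *
      mfh₂ (τ : ℂ) w₁ ((τ : ℂ) ^ (-(n₂ : ℤ)) / w₂) n₁ n₂ =
      (τ : ℂ) ^ (-((n₁ : ℤ) * (n₂ : ℤ))) * mfe (τ : ℂ) w₁ w₂ n₁ n₂ := by
  obtain ⟨hτ₀, hτ₁⟩ := hτ
  have ht₀ : (τ : ℂ) ≠ 0 := by exact_mod_cast hτ₀.ne'
  have ht₁ : ‖(τ : ℂ)‖ < 1 := by rwa [Complex.norm_real, Real.norm_of_nonneg hτ₀.le]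
  have hnat (k : ℕ) : 1 - (τ : ℂ) ^ k * (w₁ * w₂) ≠ 0 := by simpa using hnz k
  have hmfe : mfe τ w₁ w₂ n₁ n₂ ≠ 0 :=
    div_ne_zero (mul_ne_zero (hnat _) (hnat _)) (mul_ne_zero (by simpa using hnat 0) (hnat _))
  rw [mfh₁_mul_mfh₁_reciprocal ht₀ ht₁ hw₁ hw₂ n₁ n₂ hnz, mfh₂_zpow_neg_div_left ht₀ hw₁,
    mfh₂_zpow_neg_div_right ht₀ w₁ hw₂]
  field_simp
end
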